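/- Let F be a family of subsets of a nonempty set X closed under arbitrary intersections and containing X, and let L be a complete lattice. Define N(L, F) = { f : X → L : the family of cuts of f equals F } and S(L, F) = { L₀ ⊆ L : the inclusion L₀ → L preserves all infima and the top element, and (L₀, ≤) ≅ (F, ⊇) }. Then N(L, F) = ⋃_{L₀ ∈ S(L, F)} H(L, L₀, F), where H(L, L₀, F) = { μ : X → L : L^μ = L₀ and μ_L = F }. -/

import Mathlib

/-!
For `f : X → L`, the maps `s ↦ ⨅ f '' s` and `p ↦ f_p = {x | p ≤ f x}` form an antitone Galois
connection (a polarity) between `Set X` and `L`: `p ≤ ⨅ f '' s ↔ s ⊆ f_p`. The family of cuts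
`f_L` is the range of the second map and `L^f` the range of the first, so the two are dually order
isomorphic, and `L^f`, being the range of an upper adjoint, contains `⊤` and is closed under
infima. Hence every `f` whose cuts form `F` lies in `H(L, L^f, F)`; the reverse inclusion is
immediate.
-/

open OrderDual

section Polarity

variable {α β : Type*} {g : α → β} {h : β → α}

theorem galoisConnection_of_polarity [Preorder α] [Preorder β]
    (hgh : ∀ a b, b ≤ g a ↔ a ≤ h b) : GaloisConnection (toDual ∘ h) (g ∘ ofDual) :=
  fun b a => (hgh (ofDual a) b).symm

def orderIsoRangeOfPolarity [PartialOrder α] [PartialOrder β]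
    (hgh : ∀ a b, b ≤ g a ↔ a ≤ h b) : (Set.range h)ᵒᵈ ≃o Set.range g :=
  have gc := galoisConnection_of_polarity hgh
  have h_g_h (b : β) : h (g (h b)) = h b := congrArg ofDual (gc.l_u_l_eq_l b)
  { toFun := fun s => ⟨g (ofDual s).1, Set.mem_range_self _⟩
    invFun := fun p => toDual ⟨h p, Set.mem_range_self _⟩
    left_inv := by
      rintro ⟨_, b, rfl⟩
      exact congrArg toDual (Subtype.ext (h_g_h b))
    right_inv := by
      rintro ⟨_, a, rfl⟩
      exact Subtype.ext (gc.u_l_u_eq_u (toDual a))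
    map_rel_iff' := by
      rintro ⟨_, b, rfl⟩ ⟨_, b', rfl⟩
      refine ⟨fun hle => ?_, fun hle => gc.monotone_u hle⟩
      change h b' ≤ h b
      rw [← h_g_h b, ← h_g_h b']
      exact gc.monotone_l hle }

theorem top_mem_range_of_polarity [CompleteLattice α] [CompleteLattice β]
    (hgh : ∀ a b, b ≤ g a ↔ a ≤ h b) : ⊤ ∈ Set.range g :=
  ⟨⊥, (galoisConnection_of_polarity hgh).u_top⟩

theorem sInf_mem_range_of_polarity [CompleteLattice α] [CompleteLattice β]
    (hgh : ∀ a b, b ≤ g a ↔ a ≤ h b) {S : Set β} (hS : S ⊆ Set.range g) :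
    sInf S ∈ Set.range g := by
  obtain ⟨T, rfl⟩ := Set.subset_range_iff_exists_image_eq.mp hS
  exact ⟨sSup T, by rw [sInf_image]; exact (galoisConnection_of_polarity hgh).u_sInf⟩

end Polarity

section Cuts

variable {X L : Type*} [CompleteLattice L] (f : X → L)

theorem le_sInf_image_iff_subset_setOf_le (s : Set X) (p : L) :
    p ≤ sInf (f '' s) ↔ s ⊆ {x | p ≤ f x} := by
  simp [Set.subset_def]

theorem range_sInf_image :
    Set.range (fun s => sInf (f '' s)) = {p : L | ∃ B ⊆ Set.range f, p = sInf B} := by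
  ext p
  simp only [Set.mem_range, Set.mem_ofPred_eq, Set.subset_range_iff_exists_image_eq]
  grind

theorem range_setOf_le :
    Set.range (fun p : L => {x | p ≤ f x}) = {s : Set X | ∃ p : L, s = {x : X | p ≤ f x}} := by
  ext s
  exact exists_congr fun _ => eq_comm

end Cuts

theorem n_eq_union_h_general {X L : Type*} [CompleteLattice L]
    (F : Set (Set X)) :
    {f : X → L | {s : Set X | ∃ p : L, s = {x : X | p ≤ f x}} = F} =
      ⋃ L₀ ∈ {L₀ : Set L | (⊤ ∈ L₀ ∧ ∀ S ⊆ L₀, sInf S ∈ L₀) ∧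
          Nonempty ((↥F)ᵒᵈ ≃o ↥L₀)},
        {f : X → L | {p : L | ∃ B ⊆ Set.range f, p = sInf B} = L₀ ∧
          {s : Set X | ∃ p : L, s = {x : X | p ≤ f x}} = F} := by
  ext f
  simp only [Set.mem_ofPred_eq, Set.mem_iUnion, exists_prop]
  refine ⟨fun hF => ?_, fun ⟨_, _, _, hF⟩ => hF⟩
  have hpol := le_sInf_image_iff_subset_setOf_le f
  refine ⟨_, ⟨⟨?_, fun S => ?_⟩, ⟨?_⟩⟩, rfl, hF⟩ <;> rw [← range_sInf_image]
  · exact top_mem_range_of_polarity hpol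
  · exact sInf_mem_range_of_polarity hpol
  · rw [← hF, ← range_setOf_le]
    exact orderIsoRangeOfPolarity hpol

/-- `N(L, F) = ⋃_{L₀ ∈ S(L, F)} H(L, L₀, F)`. -/
theorem n_eq_union_h {X L : Type*} [Nonempty X] [CompleteLattice L]
    (F : Set (Set X)) (hXF : Set.univ ∈ F) (hInt : ∀ G ⊆ F, ⋂₀ G ∈ F) :
    {f : X → L | {s : Set X | ∃ p : L, s = {x : X | p ≤ f x}} = F} =
      ⋃ L₀ ∈ {L₀ : Set L | (⊤ ∈ L₀ ∧ ∀ S ⊆ L₀, sInf S ∈ L₀) ∧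
          Nonempty ((↥F)ᵒᵈ ≃o ↥L₀)},
        {f : X → L | {p : L | ∃ B ⊆ Set.range f, p = sInf B} = L₀ ∧
          {s : Set X | ∃ p : L, s = {x : X | p ≤ f x}} = F} :=
  n_eq_union_h_general F
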